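/- For every integer k, the subspace A_{⟨k⟩} = span_F{ x^α : α ∈ ℕ^n with Σ_{i=1}^{n1} α_i − Σ_{r=n1+1}^n α_r = k } of A is invariant under all operators Q_{i,j} (i ≠ j, i,j ∈ {1,…,n}) and Q_{i,i} − Q_{j,j} (i,j ∈ {1,…,n}), and the only F-linear subspaces of A_{⟨k⟩} invariant under all of these operators are {0} and A_{⟨k⟩}. -/

import Mathlib

open MvPolynomial

/-- Multiplication by `x i` as an `F`-linear endomorphism of `A = F[x_1,…,x_n]`. -/
noncomputable def mulX (F : Type*) [Field F] (n : ℕ) (i : Fin n) :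
    Module.End F (MvPolynomial (Fin n) F) :=
  LinearMap.mulLeft F (X i)

/-- The partial derivative `∂_i` as an `F`-linear endomorphism of `A`. -/
noncomputable def pd (F : Type*) [Field F] (n : ℕ) (i : Fin n) :
    Module.End F (MvPolynomial (Fin n) F) :=
  (pderiv i).toLinearMap

/-- The twisted Euler operator `D̃ = Σ_{r>n1} x_r ∂_r − Σ_{i≤n1} x_i ∂_i`
(indices `0,…,n1-1` correspond to the paper's swapped indices `1,…,n1`). -/
noncomputable def Dt (F : Type*) [Field F] (n n1 : ℕ) :
    Module.End F (MvPolynomial (Fin n) F) :=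
  ∑ r : Fin n, if (r : ℕ) < n1 then -(mulX F n r * pd F n r) else mulX F n r * pd F n r

/-- The twisted projective oscillator operators `Q_{i,j}` attached to the swapped
index set `S = {1,…,n1}`; index `n` plays the role of the paper's index `n+1`. -/
noncomputable def Q (F : Type*) [Field F] (n n1 : ℕ) (c : F) (i j : Fin (n + 1)) :
    Module.End F (MvPolynomial (Fin n) F) :=
  if hi : (i : ℕ) < n then
    if hj : (j : ℕ) < n then
      if (i : ℕ) < n1 then
        if (j : ℕ) < n1 then
          -(mulX F n ⟨j, hj⟩ * pd F n ⟨i, hi⟩) - (if i = j then 1 else 0)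
        else pd F n ⟨i, hi⟩ * pd F n ⟨j, hj⟩
      else
        if (j : ℕ) < n1 then -(mulX F n ⟨i, hi⟩ * mulX F n ⟨j, hj⟩)
        else mulX F n ⟨i, hi⟩ * pd F n ⟨j, hj⟩
    else
      if (i : ℕ) < n1 then (Dt F n n1 + (c - n1 - 1) • 1) * pd F n ⟨i, hi⟩
      else mulX F n ⟨i, hi⟩ * (Dt F n n1 + (c - n1) • 1)
  else
    if hj : (j : ℕ) < n then
      if (j : ℕ) < n1 then mulX F n ⟨j, hj⟩
      else -pd F n ⟨j, hj⟩
    else -(Dt F n n1 + (c - n1) • 1)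

/-- The subspace `A_{⟨k⟩}` spanned by the monomials `x^α` with
`Σ_{i≤n1} α_i − Σ_{r>n1} α_r = k`. -/
noncomputable def Agr (F : Type*) [Field F] (n n1 : ℕ) (k : ℤ) :
    Submodule F (MvPolynomial (Fin n) F) :=
  Submodule.span F {f | ∃ α : Fin n →₀ ℕ, f = monomial α (1 : F) ∧
    (∑ i : Fin n, if (i : ℕ) < n1 then (α i : ℤ) else -(α i : ℤ)) = k}

/-- twisted degree -/
def tdeg {n : ℕ} (n1 : ℕ) (α : Fin n →₀ ℕ) : ℤ :=
  ∑ i : Fin n, if (i : ℕ) < n1 then (α i : ℤ) else -(α i : ℤ)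

section Basics
variable {F : Type*} [Field F] {n n1 : ℕ}

lemma mulX_monomial (i : Fin n) (α : Fin n →₀ ℕ) (b : F) :
    mulX F n i (monomial α b) = monomial (α + Finsupp.single i 1) b := by
  simp [mulX, LinearMap.mulLeft_apply, X, monomial_mul, add_comm]

lemma pd_monomial (i : Fin n) (α : Fin n →₀ ℕ) (b : F) :
    pd F n i (monomial α b) = monomial (α - Finsupp.single i 1) (b * (α i : F)) := by
  simp [pd, pderiv_monomial]

lemma tdeg_add (α β : Fin n →₀ ℕ) : tdeg n1 (α + β) = tdeg n1 α + tdeg n1 β := by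
  unfold tdeg
  rw [← Finset.sum_add_distrib]
  refine Finset.sum_congr rfl fun i _ => ?_
  by_cases h : (i : ℕ) < n1 <;> simp [h] <;> push_cast <;> ring

lemma tdeg_single (i : Fin n) (m : ℕ) :
    tdeg n1 (Finsupp.single i m) = if (i : ℕ) < n1 then (m : ℤ) else -(m : ℤ) := by
  unfold tdeg
  rw [Finset.sum_eq_single i]
  · simp
  · intro j _ hj
    rw [Finsupp.single_eq_of_ne' (Ne.symm hj)]
    simp
  · simp

lemma tdeg_sub_single (i : Fin n) (α : Fin n →₀ ℕ) (h : α i ≠ 0) :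
    tdeg n1 (α - Finsupp.single i 1) = tdeg n1 α - (if (i : ℕ) < n1 then 1 else -1) := by
  have : α = (α - Finsupp.single i 1) + Finsupp.single i 1 := by
    ext j
    by_cases hj : j = i
    · subst hj; simp [Nat.sub_add_cancel (Nat.one_le_iff_ne_zero.2 h)]
    · simp [Finsupp.single_eq_of_ne' (Ne.symm hj)]
  conv_rhs => rw [this]
  rw [tdeg_add, tdeg_single]
  by_cases hi : (i : ℕ) < n1 <;> simp [hi]

end Basics

section QAct
variable {F : Type*} [Field F] {n n1 : ℕ} {c : F}

lemma Q_castSucc (i j : Fin n) : Q F n n1 c i.castSucc j.castSucc =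
    if (i : ℕ) < n1 then
      if (j : ℕ) < n1 then
        -(mulX F n j * pd F n i) - (if i = j then 1 else 0)
      else pd F n i * pd F n j
    else
      if (j : ℕ) < n1 then -(mulX F n i * mulX F n j)
      else mulX F n i * pd F n j := by
  simp [Q, Fin.coe_castSucc, i.isLt, j.isLt, Fin.castSucc_inj]

lemma Q_act_11 {i j : Fin n} (hi : (i : ℕ) < n1) (hj : (j : ℕ) < n1) (hij : i ≠ j)
    (α : Fin n →₀ ℕ) (b : F) :
    Q F n n1 c i.castSucc j.castSucc (monomial α b)
      = monomial (α - Finsupp.single i 1 + Finsupp.single j 1) (-(b * (α i : F))) := by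
  rw [Q_castSucc, if_pos hi, if_pos hj, if_neg hij]
  simp [Module.End.mul_apply, pd_monomial, mulX_monomial, smul_monomial]

lemma Q_act_12 {i j : Fin n} (hi : (i : ℕ) < n1) (hj : ¬ (j : ℕ) < n1)
    (α : Fin n →₀ ℕ) (b : F) :
    Q F n n1 c i.castSucc j.castSucc (monomial α b)
      = monomial (α - Finsupp.single j 1 - Finsupp.single i 1)
          (b * (α j : F) * (α i : F)) := by
  have hij : i ≠ j := fun h => hj (h ▸ hi)
  rw [Q_castSucc, if_pos hi, if_neg hj]
  simp [Module.End.mul_apply, pd_monomial, Finsupp.sub_apply,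
    Finsupp.single_eq_of_ne' (Ne.symm hij)]

lemma Q_act_21 {i j : Fin n} (hi : ¬ (i : ℕ) < n1) (hj : (j : ℕ) < n1)
    (α : Fin n →₀ ℕ) (b : F) :
    Q F n n1 c i.castSucc j.castSucc (monomial α b)
      = monomial (α + Finsupp.single i 1 + Finsupp.single j 1) (-b) := by
  rw [Q_castSucc, if_neg hi, if_pos hj]
  simp only [LinearMap.neg_apply, Module.End.mul_apply, mulX_monomial]
  rw [← map_neg]
  congr 1
  abel

lemma Q_act_22 {i j : Fin n} (hi : ¬ (i : ℕ) < n1) (hj : ¬ (j : ℕ) < n1)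
    (α : Fin n →₀ ℕ) (b : F) :
    Q F n n1 c i.castSucc j.castSucc (monomial α b)
      = monomial (α - Finsupp.single j 1 + Finsupp.single i 1) (b * (α j : F)) := by
  rw [Q_castSucc, if_neg hi, if_neg hj]
  simp [Module.End.mul_apply, pd_monomial, mulX_monomial]

end QAct

section Diag
variable {F : Type*} [Field F] {n n1 : ℕ} {c : F}

/-- eigenvalue of `Q i i` on `x^α` -/
def ev (n1 : ℕ) {n : ℕ} (i : Fin n) (α : Fin n →₀ ℕ) : ℤ :=
  if (i : ℕ) < n1 then -(α i : ℤ) - 1 else (α i : ℤ)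

lemma sub_single_add_single {n : ℕ} (i : Fin n) (α : Fin n →₀ ℕ) (h : α i ≠ 0) :
    α - Finsupp.single i 1 + Finsupp.single i 1 = α := by
  ext j
  by_cases hj : j = i
  · subst hj; simp [Nat.sub_add_cancel (Nat.one_le_iff_ne_zero.2 h)]
  · simp [Finsupp.single_eq_of_ne' (Ne.symm hj)]

lemma xdx_monomial (i : Fin n) (α : Fin n →₀ ℕ) (b : F) :
    (mulX F n i * pd F n i) (monomial α b) = (α i : F) • monomial α b := by
  rw [Module.End.mul_apply, pd_monomial, mulX_monomial, smul_monomial]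
  by_cases h : α i = 0
  · simp [h]
  · rw [sub_single_add_single i α h, smul_eq_mul, mul_comm]

lemma Q_act_diag (i : Fin n) (α : Fin n →₀ ℕ) (b : F) :
    Q F n n1 c i.castSucc i.castSucc (monomial α b)
      = ((ev n1 i α : ℤ) : F) • monomial α b := by
  rw [Q_castSucc]
  by_cases hi : (i : ℕ) < n1
  · simp only [ev, if_pos hi, eq_self_iff_true, if_true, LinearMap.sub_apply,
      LinearMap.neg_apply, xdx_monomial, Module.End.one_apply]
    push_cast
    module
  · simp only [ev, if_neg hi, xdx_monomial]
    norm_cast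

lemma Qdiff_monomial (i j : Fin n) (α : Fin n →₀ ℕ) (b : F) :
    (Q F n n1 c i.castSucc i.castSucc - Q F n n1 c j.castSucc j.castSucc) (monomial α b)
      = ((ev n1 i α - ev n1 j α : ℤ) : F) • monomial α b := by
  rw [LinearMap.sub_apply, Q_act_diag, Q_act_diag, ← sub_smul]
  push_cast
  ring_nf

end Diag

section Mem
variable {F : Type*} [Field F] {n n1 : ℕ} {k : ℤ}

lemma monomial_mem_Agr {α : Fin n →₀ ℕ} (h : tdeg n1 α = k) (b : F) :
    monomial α b ∈ Agr F n n1 k := by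
  have h1 : monomial α (1 : F) ∈ Agr F n n1 k :=
    Submodule.subset_span ⟨α, rfl, h⟩
  have := Submodule.smul_mem (Agr F n n1 k) b h1
  rwa [smul_monomial, smul_eq_mul, mul_one] at this

lemma mem_Agr_iff {f : MvPolynomial (Fin n) F} :
    f ∈ Agr F n n1 k ↔ ∀ α ∈ f.support, tdeg n1 α = k := by
  classical
  constructor
  · intro h
    refine Submodule.span_induction ?_ ?_ ?_ ?_ h
    · rintro g ⟨α, rfl, hα⟩ β hβ
      rw [support_monomial] at hβ
      simp only [if_neg (one_ne_zero (α := F))] at hβ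
      rw [Finset.mem_singleton] at hβ
      subst hβ; exact hα
    · simp
    · intro g h _ _ hg hh β hβ
      rcases Finset.mem_union.1 (MvPolynomial.support_add hβ) with h' | h'
      · exact hg β h'
      · exact hh β h'
    · intro a g _ hg β hβ
      exact hg β (Finsupp.support_smul hβ)
  · intro h
    rw [f.as_sum]
    exact Submodule.sum_mem _ fun α hα => monomial_mem_Agr (h α hα) _
end Mem

section Extract
variable {F : Type*} [Field F] [CharZero F] {n n1 : ℕ} {c : F} {k : ℤ}

lemma Qdiff_apply (i j : Fin n) (f : MvPolynomial (Fin n) F) :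
    (Q F n n1 c i.castSucc i.castSucc - Q F n n1 c j.castSucc j.castSucc) f
      = ∑ γ ∈ f.support, ((ev n1 i γ - ev n1 j γ : ℤ) : F) • monomial γ (coeff γ f) := by
  conv_lhs => rw [f.as_sum, map_sum]
  exact Finset.sum_congr rfl fun γ _ => Qdiff_monomial i j γ _

lemma coeff_Qdiff (i j : Fin n) (f : MvPolynomial (Fin n) F) (β : Fin n →₀ ℕ) :
    coeff β ((Q F n n1 c i.castSucc i.castSucc - Q F n n1 c j.castSucc j.castSucc) f)
      = ((ev n1 i β - ev n1 j β : ℤ) : F) * coeff β f := by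
  classical
  rw [Qdiff_apply, coeff_sum]
  simp only [coeff_smul, coeff_monomial, smul_eq_mul, mul_ite, mul_zero]
  rw [Finset.sum_ite_eq' f.support β (fun γ => ((ev n1 i γ - ev n1 j γ : ℤ) : F) * coeff γ f)]
  by_cases hβ : β ∈ f.support
  · rw [if_pos hβ]
  · rw [if_neg hβ, notMem_support_iff.1 hβ, mul_zero]

lemma sep (hn1 : 1 ≤ n1) (hn1n : n1 < n) {α β : Fin n →₀ ℕ}
    (hα : tdeg n1 α = k) (hβ : tdeg n1 β = k)
    (h : ∀ i j : Fin n, ev n1 i α - ev n1 j α = ev n1 i β - ev n1 j β) : α = β := by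
  have hn0 : 0 < n := lt_of_le_of_lt (Nat.zero_le n1) hn1n
  set d : Fin n → ℤ := fun i => ev n1 i α - ev n1 i β with hd
  have hdc : ∀ i j : Fin n, d i = d j := by
    intro i j
    have := h i j
    simp only [hd]
    omega
  set i0 : Fin n := ⟨0, hn0⟩
  have hsum : (∑ i : Fin n, -(d i)) = 0 := by
    have : (∑ i : Fin n, -(d i)) = tdeg n1 α - tdeg n1 β := by
      unfold tdeg
      rw [← Finset.sum_sub_distrib]
      refine Finset.sum_congr rfl fun i _ => ?_
      by_cases hi : (i : ℕ) < n1 <;> simp [hd, ev, hi] <;> ring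
    rw [this, hα, hβ, sub_self]
  have hconst : (∑ i : Fin n, -(d i)) = n * (-(d i0)) := by
    rw [Finset.sum_congr rfl fun i _ => by rw [hdc i i0]]
    simp [Finset.card_univ, mul_comm]
  have hd0 : d i0 = 0 := by
    rw [hconst] at hsum
    have hnz : (n : ℤ) ≠ 0 := Int.natCast_ne_zero.2 hn0.ne'
    rcases mul_eq_zero.1 hsum with h | h
    · exact absurd h hnz
    · omega
  ext i
  have : d i = 0 := (hdc i i0).trans hd0
  simp only [hd, ev] at this
  by_cases hi : (i : ℕ) < n1 <;> simp [hi] at this <;> omega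

lemma exists_monomial_mem {W : Submodule F (MvPolynomial (Fin n) F)}
    (hn1 : 1 ≤ n1) (hn1n : n1 < n)
    (hW : W ≤ Agr F n n1 k)
    (hD : ∀ i j : Fin n, ∀ f ∈ W,
      (Q F n n1 c i.castSucc i.castSucc - Q F n n1 c j.castSucc j.castSucc) f ∈ W)
    (hne : W ≠ ⊥) :
    ∃ α : Fin n →₀ ℕ, tdeg n1 α = k ∧ monomial α (1 : F) ∈ W := by
  classical
  obtain ⟨f0, hf0W, hf0ne⟩ := Submodule.exists_mem_ne_zero_of_ne_bot hne
  have hP : ∃ m, ∃ f, f ∈ W ∧ f ≠ 0 ∧ f.support.card = m :=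
    ⟨f0.support.card, f0, hf0W, hf0ne, rfl⟩
  obtain ⟨f, hfW, hfne, hfcard⟩ := Nat.find_spec hP
  have hmin := fun m (hm : m < Nat.find hP) => Nat.find_min hP hm
  obtain ⟨α, hαsup⟩ := (support_nonempty.2 hfne)
  have hsingle : f.support = {α} := by
    by_contra hS
    have h2 : 1 < f.support.card := by
      have hc0 : 0 < f.support.card := Finset.card_pos.2 ⟨α, hαsup⟩
      by_contra h2
      have hc1 : f.support.card = 1 := by omega
      obtain ⟨a, ha⟩ := Finset.card_eq_one.1 hc1
      apply hS
      rw [ha] at hαsup ⊢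
      rw [Finset.mem_singleton.1 hαsup]
    obtain ⟨β, hβsup, hβα⟩ := Finset.exists_mem_ne h2 α
    have hdegα : tdeg n1 α = k := mem_Agr_iff.1 (hW hfW) α hαsup
    have hdegβ : tdeg n1 β = k := mem_Agr_iff.1 (hW hfW) β hβsup
    have : ¬ ∀ i j : Fin n, ev n1 i β - ev n1 j β = ev n1 i α - ev n1 j α := by
      intro hall
      exact hβα (sep hn1 hn1n hdegβ hdegα hall)
    push_neg at this
    obtain ⟨i, j, hij⟩ := this
    set g : MvPolynomial (Fin n) F :=
      (Q F n n1 c i.castSucc i.castSucc - Q F n n1 c j.castSucc j.castSucc) f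
        - ((ev n1 i α - ev n1 j α : ℤ) : F) • f with hg
    have hgW : g ∈ W := Submodule.sub_mem W (hD i j f hfW) (Submodule.smul_mem W _ hfW)
    have hgcoeff : ∀ γ, coeff γ g
        = (((ev n1 i γ - ev n1 j γ : ℤ) : F) - ((ev n1 i α - ev n1 j α : ℤ) : F)) * coeff γ f := by
      intro γ
      rw [hg, coeff_sub, coeff_Qdiff, coeff_smul, smul_eq_mul]
      ring
    have hgβ : coeff β g ≠ 0 := by
      rw [hgcoeff]
      refine mul_ne_zero ?_ (mem_support_iff.1 hβsup)
      rw [sub_ne_zero]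
      exact fun hc => hij (Int.cast_injective hc)
    have hgsub : g.support ⊆ f.support \ {α} := by
      intro γ hγ
      rw [Finset.mem_sdiff, Finset.mem_singleton]
      have hcγ := mem_support_iff.1 hγ
      constructor
      · by_contra hγf
        exact hcγ (by rw [hgcoeff, notMem_support_iff.1 hγf, mul_zero])
      · rintro rfl
        exact hcγ (by rw [hgcoeff]; simp)
    have hcard : g.support.card < Nat.find hP := by
      calc g.support.card ≤ (f.support \ {α}).card := Finset.card_le_card hgsub
        _ < f.support.card := by
            refine Finset.card_lt_card ?_
            rw [Finset.ssubset_iff_of_subset (Finset.sdiff_subset)]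
            exact ⟨α, hαsup, by simp⟩
        _ = Nat.find hP := hfcard
    exact hmin _ hcard ⟨g, hgW, fun h0 => hgβ (by rw [h0, coeff_zero]), rfl⟩
  have hfeq : f = monomial α (coeff α f) := by
    conv_lhs => rw [f.as_sum, hsingle]
    simp
  refine ⟨α, mem_Agr_iff.1 (hW hfW) α hαsup, ?_⟩
  set b := coeff α f with hb
  have hc0 : b ≠ 0 := mem_support_iff.1 hαsup
  have hmem : b⁻¹ • f ∈ W := Submodule.smul_mem W _ hfW
  rw [hfeq] at hmem
  rwa [smul_monomial, smul_eq_mul, inv_mul_cancel₀ hc0] at hmem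

end Extract

section Gen
variable {F : Type*} [Field F] [CharZero F] {n n1 : ℕ} {c : F} {k : ℤ}
variable {W : Submodule F (MvPolynomial (Fin n) F)}

lemma mono_mem_of_smul {β : Fin n →₀ ℕ} {b : F} (hb : b ≠ 0)
    (h : monomial β b ∈ W) : monomial β (1 : F) ∈ W := by
  have := W.smul_mem b⁻¹ h
  rwa [smul_monomial, smul_eq_mul, inv_mul_cancel₀ hb] at this

lemma move1
    (hQ : ∀ i j : Fin n, i ≠ j → ∀ f ∈ W, Q F n n1 c i.castSucc j.castSucc f ∈ W)
    {i j : Fin n} (hi : (i : ℕ) < n1) (hj : (j : ℕ) < n1) (hij : i ≠ j)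
    {α : Fin n →₀ ℕ} (hαi : α i ≠ 0) (h : monomial α (1 : F) ∈ W) :
    monomial (α - Finsupp.single i 1 + Finsupp.single j 1) (1 : F) ∈ W := by
  have := hQ i j hij _ h
  rw [Q_act_11 hi hj hij] at this
  exact mono_mem_of_smul (by simp [hαi]) this

lemma move4
    (hQ : ∀ i j : Fin n, i ≠ j → ∀ f ∈ W, Q F n n1 c i.castSucc j.castSucc f ∈ W)
    {i j : Fin n} (hi : ¬ (i : ℕ) < n1) (hj : ¬ (j : ℕ) < n1) (hij : i ≠ j)
    {α : Fin n →₀ ℕ} (hαi : α i ≠ 0) (h : monomial α (1 : F) ∈ W) :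
    monomial (α - Finsupp.single i 1 + Finsupp.single j 1) (1 : F) ∈ W := by
  have := hQ j i (Ne.symm hij) _ h
  rw [Q_act_22 hj hi] at this
  exact mono_mem_of_smul (by simp [hαi]) this

lemma raise
    (hQ : ∀ i j : Fin n, i ≠ j → ∀ f ∈ W, Q F n n1 c i.castSucc j.castSucc f ∈ W)
    {i0 j0 : Fin n} (hi0 : (i0 : ℕ) < n1) (hj0 : ¬ (j0 : ℕ) < n1)
    {α : Fin n →₀ ℕ} (h : monomial α (1 : F) ∈ W) :
    monomial (α + Finsupp.single i0 1 + Finsupp.single j0 1) (1 : F) ∈ W := by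
  have hij : j0 ≠ i0 := fun e => hj0 (e ▸ hi0)
  have := hQ j0 i0 hij _ h
  rw [Q_act_21 hj0 hi0] at this
  have h2 := mono_mem_of_smul (by norm_num) this
  rwa [add_right_comm] at h2

lemma lower
    (hQ : ∀ i j : Fin n, i ≠ j → ∀ f ∈ W, Q F n n1 c i.castSucc j.castSucc f ∈ W)
    {i0 j0 : Fin n} (hi0 : (i0 : ℕ) < n1) (hj0 : ¬ (j0 : ℕ) < n1)
    {α : Fin n →₀ ℕ} (hα1 : α i0 ≠ 0) (hα2 : α j0 ≠ 0) (h : monomial α (1 : F) ∈ W) :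
    monomial (α - Finsupp.single i0 1 - Finsupp.single j0 1) (1 : F) ∈ W := by
  have hij : i0 ≠ j0 := fun e => hj0 (e ▸ hi0)
  have := hQ i0 j0 hij _ h
  rw [Q_act_12 hi0 hj0] at this
  have h2 := mono_mem_of_smul (by simp [hα1, hα2]) this
  have he : α - Finsupp.single j0 1 - Finsupp.single i0 1
      = α - Finsupp.single i0 1 - Finsupp.single j0 1 := by
    ext l
    simp only [Finsupp.tsub_apply]
    omega
  rwa [he] at h2

lemma redistribute (s : Finset (Fin n))
    (hmov : ∀ (α : Fin n →₀ ℕ) (i j : Fin n), i ∈ s → j ∈ s → i ≠ j → α i ≠ 0 →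
      monomial α (1 : F) ∈ W →
      monomial (α - Finsupp.single i 1 + Finsupp.single j 1) (1 : F) ∈ W) :
    ∀ (N : ℕ) (α β : Fin n →₀ ℕ), (∑ l ∈ s, (β l - α l)) ≤ N →
      (∀ l, l ∉ s → α l = β l) → (∑ l ∈ s, α l) = (∑ l ∈ s, β l) →
      monomial α (1 : F) ∈ W → monomial β (1 : F) ∈ W := by
  intro N
  induction N with
  | zero =>
    intro α β hμ hoff hsum h
    have hle : ∀ l ∈ s, β l ≤ α l := by
      intro l hl
      have := Finset.sum_eq_zero_iff.1 (Nat.le_zero.1 hμ) l hl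
      omega
    have heq : α = β := by
      ext l
      by_cases hl : l ∈ s
      · by_contra hne
        have hlt : β l < α l := lt_of_le_of_ne (hle l hl) fun e => hne e.symm
        have : (∑ l ∈ s, β l) < (∑ l ∈ s, α l) := Finset.sum_lt_sum hle ⟨l, hl, hlt⟩
        omega
      · exact hoff l hl
    rwa [heq] at h
  | succ N ih =>
    intro α β hμ hoff hsum h
    by_cases hab : α = β
    · rwa [hab] at h
    have hex1 : ∃ i ∈ s, β i < α i := by
      by_contra hc
      push_neg at hc
      apply hab
      ext l
      by_cases hl : l ∈ s
      · by_contra hne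
        have hlt : α l < β l := lt_of_le_of_ne (hc l hl) hne
        have : (∑ l ∈ s, α l) < (∑ l ∈ s, β l) := Finset.sum_lt_sum hc ⟨l, hl, hlt⟩
        omega
      · exact hoff l hl
    obtain ⟨i, hi, hilt⟩ := hex1
    have hex2 : ∃ j ∈ s, α j < β j := by
      by_contra hc
      push_neg at hc
      have : (∑ l ∈ s, β l) < (∑ l ∈ s, α l) := Finset.sum_lt_sum hc ⟨i, hi, hilt⟩
      omega
    obtain ⟨j, hj, hjlt⟩ := hex2
    have hij : i ≠ j := by rintro rfl; omega
    set α' := α - Finsupp.single i 1 + Finsupp.single j 1 with hα'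
    have hα'app : ∀ l, α' l = if l = i then α i - 1 else if l = j then α j + 1 else α l := by
      intro l
      simp only [hα', Finsupp.add_apply, Finsupp.tsub_apply, Finsupp.single_apply]
      rcases eq_or_ne l i with rfl | hli
      · simp [Ne.symm hij]
      · rcases eq_or_ne l j with rfl | hlj
        · simp [hij, hli, Ne.symm hli]
        · simp [Ne.symm hli, Ne.symm hlj, hli, hlj]
    have hμ' : (∑ l ∈ s, (β l - α' l)) < (∑ l ∈ s, (β l - α l)) := by
      refine Finset.sum_lt_sum (fun l hl => ?_) ⟨j, hj, ?_⟩
      · rw [hα'app]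
        rcases eq_or_ne l i with rfl | hli
        · simp only [if_true, eq_self_iff_true]; omega
        · rcases eq_or_ne l j with rfl | hlj
          · simp only [if_neg hli, if_true, eq_self_iff_true]; omega
          · simp only [if_neg hli, if_neg hlj]; omega
      · rw [hα'app, if_neg (Ne.symm hij)]
        simp only [if_true, eq_self_iff_true]
        omega
    have hsum' : (∑ l ∈ s, α' l) = (∑ l ∈ s, β l) := by
      rw [← hsum]
      have hj' : j ∈ s.erase i := Finset.mem_erase.2 ⟨Ne.symm hij, hj⟩
      have key : ∀ f : Fin n → ℕ,
          (∑ l ∈ s, f l) = f i + (f j + ∑ l ∈ (s.erase i).erase j, f l) := by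
        intro f
        rw [← Finset.add_sum_erase _ f hi, ← Finset.add_sum_erase _ f hj']
      rw [key (fun l => α' l), key (fun l => α l)]
      have hrest : (∑ l ∈ (s.erase i).erase j, α' l) = ∑ l ∈ (s.erase i).erase j, α l := by
        refine Finset.sum_congr rfl fun l hl => ?_
        have hl1 := Finset.mem_erase.1 hl
        have hl2 := Finset.mem_erase.1 hl1.2
        rw [hα'app, if_neg hl2.1, if_neg hl1.1]
      rw [hrest, hα'app i, hα'app j, if_pos rfl, if_neg (Ne.symm hij), if_pos rfl]
      omega
    have hoff' : ∀ l, l ∉ s → α' l = β l := by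
      intro l hl
      have hli : l ≠ i := fun e => hl (by rw [e]; exact hi)
      have hlj : l ≠ j := fun e => hl (by rw [e]; exact hj)
      rw [hα'app, if_neg hli, if_neg hlj]
      exact hoff l hl
    exact ih α' β (by omega) hoff' hsum'
      (hmov α i j hi hj hij (by omega) h)

lemma tdeg_split (α : Fin n →₀ ℕ) :
    tdeg n1 α = (∑ l ∈ Finset.univ.filter (fun l : Fin n => (l : ℕ) < n1), (α l : ℤ))
      - ∑ l ∈ Finset.univ.filter (fun l : Fin n => ¬ (l : ℕ) < n1), (α l : ℤ) := by
  classical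
  unfold tdeg
  rw [← Finset.sum_filter_add_sum_filter_not Finset.univ (fun l : Fin n => (l : ℕ) < n1)]
  rw [Finset.sum_congr rfl (fun l hl => if_pos (Finset.mem_filter.1 hl).2),
    Finset.sum_congr rfl (fun l hl => if_neg (Finset.mem_filter.1 hl).2),
    Finset.sum_neg_distrib]
  ring

lemma conc
    (hQ : ∀ i j : Fin n, i ≠ j → ∀ f ∈ W, Q F n n1 c i.castSucc j.castSucc f ∈ W)
    {i0 j0 : Fin n} (hi0 : (i0 : ℕ) < n1) (hj0 : ¬ (j0 : ℕ) < n1)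
    {α : Fin n →₀ ℕ} (h : monomial α (1 : F) ∈ W) :
    monomial (Finsupp.single i0 (∑ l ∈ Finset.univ.filter (fun l : Fin n => (l : ℕ) < n1), α l)
      + Finsupp.single j0 (∑ l ∈ Finset.univ.filter (fun l : Fin n => ¬ (l : ℕ) < n1), α l))
      (1 : F) ∈ W := by
  classical
  set s1 : Finset (Fin n) := Finset.univ.filter (fun l : Fin n => (l : ℕ) < n1) with hs1
  set s2 : Finset (Fin n) := Finset.univ.filter (fun l : Fin n => ¬ (l : ℕ) < n1) with hs2
  have mem_s1 : ∀ l : Fin n, l ∈ s1 ↔ (l : ℕ) < n1 := fun l => by simp [hs1]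
  have mem_s2 : ∀ l : Fin n, l ∈ s2 ↔ ¬ (l : ℕ) < n1 := fun l => by simp [hs2]
  set a := ∑ l ∈ s1, α l with ha
  set b := ∑ l ∈ s2, α l with hb
  set mid : Fin n →₀ ℕ := α.filter (fun l : Fin n => ¬ (l : ℕ) < n1) + Finsupp.single i0 a
    with hmid
  have hmid_app : ∀ l, mid l
      = (if ¬ (l : ℕ) < n1 then α l else 0) + (if i0 = l then a else 0) := fun l => by
    rw [hmid, Finsupp.add_apply, Finsupp.filter_apply, Finsupp.single_apply]
  have hi0j0 : i0 ≠ j0 := fun e => hj0 (e ▸ hi0)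
  have hi0s1 : i0 ∈ s1 := (mem_s1 i0).2 hi0
  have hj0s2 : j0 ∈ s2 := (mem_s2 j0).2 hj0
  -- step 1 : concentrate block 1
  have step1 : monomial mid (1 : F) ∈ W := by
    refine redistribute s1 ?_ (∑ l ∈ s1, (mid l - α l)) α mid le_rfl ?_ ?_ h
    · intro γ i j hi hj hij hγi hγ
      exact move1 hQ ((mem_s1 i).1 hi) ((mem_s1 j).1 hj) hij hγi hγ
    · intro l hl
      have hln : ¬ (l : ℕ) < n1 := fun hc => hl ((mem_s1 l).2 hc)
      have : i0 ≠ l := fun e => hln (e ▸ hi0)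
      rw [hmid_app, if_pos hln, if_neg this, add_zero]
    · rw [Finset.sum_congr rfl (fun l hl => hmid_app l), Finset.sum_add_distrib]
      rw [Finset.sum_eq_zero (fun l hl => if_neg (not_not.2 ((mem_s1 l).1 hl))),
        Finset.sum_ite_eq s1 i0 (fun _ => a), if_pos hi0s1, zero_add]
  -- step 2 : concentrate block 2
  refine redistribute s2 ?_ (∑ l ∈ s2, ((Finsupp.single i0 a + Finsupp.single j0 b) l - mid l))
    mid _ le_rfl ?_ ?_ step1
  · intro γ i j hi hj hij hγi hγ
    exact move4 hQ ((mem_s2 i).1 hi) ((mem_s2 j).1 hj) hij hγi hγ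
  · intro l hl
    have hln : (l : ℕ) < n1 := not_not.1 fun hc => hl ((mem_s2 l).2 hc)
    have hj0l : j0 ≠ l := fun e => hj0 (e ▸ hln)
    rw [hmid_app, if_neg (not_not.2 hln), Finsupp.add_apply, Finsupp.single_apply,
      Finsupp.single_apply, if_neg hj0l, zero_add, add_zero]
  · have hml : ∀ l ∈ s2, mid l = α l := by
      intro l hl
      have hln : ¬ (l : ℕ) < n1 := (mem_s2 l).1 hl
      have : i0 ≠ l := fun e => hln (e ▸ hi0)
      rw [hmid_app, if_pos hln, if_neg this, add_zero]
    rw [Finset.sum_congr rfl hml]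
    have : ∀ l ∈ s2, (Finsupp.single i0 a + Finsupp.single j0 b) l
        = (if j0 = l then b else 0) := by
      intro l hl
      have hln : ¬ (l : ℕ) < n1 := (mem_s2 l).1 hl
      have : i0 ≠ l := fun e => hln (e ▸ hi0)
      rw [Finsupp.add_apply, Finsupp.single_apply, Finsupp.single_apply, if_neg this, zero_add]
    rw [Finset.sum_congr rfl this, Finset.sum_ite_eq s2 j0 (fun _ => b), if_pos hj0s2]

lemma conc_rev
    (hQ : ∀ i j : Fin n, i ≠ j → ∀ f ∈ W, Q F n n1 c i.castSucc j.castSucc f ∈ W)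
    {i0 j0 : Fin n} (hi0 : (i0 : ℕ) < n1) (hj0 : ¬ (j0 : ℕ) < n1)
    {a b : ℕ} {β : Fin n →₀ ℕ}
    (ha : (∑ l ∈ Finset.univ.filter (fun l : Fin n => (l : ℕ) < n1), β l) = a)
    (hb : (∑ l ∈ Finset.univ.filter (fun l : Fin n => ¬ (l : ℕ) < n1), β l) = b)
    (h : monomial (Finsupp.single i0 a + Finsupp.single j0 b) (1 : F) ∈ W) :
    monomial β (1 : F) ∈ W := by
  classical
  set s1 : Finset (Fin n) := Finset.univ.filter (fun l : Fin n => (l : ℕ) < n1) with hs1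
  set s2 : Finset (Fin n) := Finset.univ.filter (fun l : Fin n => ¬ (l : ℕ) < n1) with hs2
  have mem_s1 : ∀ l : Fin n, l ∈ s1 ↔ (l : ℕ) < n1 := fun l => by simp [hs1]
  have mem_s2 : ∀ l : Fin n, l ∈ s2 ↔ ¬ (l : ℕ) < n1 := fun l => by simp [hs2]
  set mid : Fin n →₀ ℕ := β.filter (fun l : Fin n => ¬ (l : ℕ) < n1) + Finsupp.single i0 a
    with hmid
  have hmid_app : ∀ l, mid l
      = (if ¬ (l : ℕ) < n1 then β l else 0) + (if i0 = l then a else 0) := fun l => by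
    rw [hmid, Finsupp.add_apply, Finsupp.filter_apply, Finsupp.single_apply]
  have hi0s1 : i0 ∈ s1 := (mem_s1 i0).2 hi0
  have hj0s2 : j0 ∈ s2 := (mem_s2 j0).2 hj0
  -- step 1 : spread block 2
  have step1 : monomial mid (1 : F) ∈ W := by
    refine redistribute s2 ?_
      (∑ l ∈ s2, (mid l - (Finsupp.single i0 a + Finsupp.single j0 b) l)) _ mid le_rfl ?_ ?_ h
    · intro γ i j hi hj hij hγi hγ
      exact move4 hQ ((mem_s2 i).1 hi) ((mem_s2 j).1 hj) hij hγi hγ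
    · intro l hl
      have hln : (l : ℕ) < n1 := not_not.1 fun hc => hl ((mem_s2 l).2 hc)
      have hj0l : j0 ≠ l := fun e => hj0 (e ▸ hln)
      rw [hmid_app, if_neg (not_not.2 hln), Finsupp.add_apply, Finsupp.single_apply,
        Finsupp.single_apply, if_neg hj0l, zero_add, add_zero]
    · have h2 : ∀ l ∈ s2, (Finsupp.single i0 a + Finsupp.single j0 b) l
          = (if j0 = l then b else 0) := by
        intro l hl
        have hln : ¬ (l : ℕ) < n1 := (mem_s2 l).1 hl
        have : i0 ≠ l := fun e => hln (e ▸ hi0)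
        rw [Finsupp.add_apply, Finsupp.single_apply, Finsupp.single_apply, if_neg this, zero_add]
      have h3 : ∀ l ∈ s2, mid l = β l := by
        intro l hl
        have hln : ¬ (l : ℕ) < n1 := (mem_s2 l).1 hl
        have : i0 ≠ l := fun e => hln (e ▸ hi0)
        rw [hmid_app, if_pos hln, if_neg this, add_zero]
      rw [Finset.sum_congr rfl h2, Finset.sum_congr rfl h3,
        Finset.sum_ite_eq s2 j0 (fun _ => b), if_pos hj0s2, hb]
  -- step 2 : spread block 1
  refine redistribute s1 ?_ (∑ l ∈ s1, (β l - mid l)) mid β le_rfl ?_ ?_ step1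
  · intro γ i j hi hj hij hγi hγ
    exact move1 hQ ((mem_s1 i).1 hi) ((mem_s1 j).1 hj) hij hγi hγ
  · intro l hl
    have hln : ¬ (l : ℕ) < n1 := fun hc => hl ((mem_s1 l).2 hc)
    have : i0 ≠ l := fun e => hln (e ▸ hi0)
    rw [hmid_app, if_pos hln, if_neg this, add_zero]
  · rw [Finset.sum_congr rfl (fun l hl => hmid_app l), Finset.sum_add_distrib]
    rw [Finset.sum_eq_zero (fun l hl => if_neg (not_not.2 ((mem_s1 l).1 hl))),
      Finset.sum_ite_eq s1 i0 (fun _ => a), if_pos hi0s1, zero_add, ha]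

lemma raiseIter
    (hQ : ∀ i j : Fin n, i ≠ j → ∀ f ∈ W, Q F n n1 c i.castSucc j.castSucc f ∈ W)
    {i0 j0 : Fin n} (hi0 : (i0 : ℕ) < n1) (hj0 : ¬ (j0 : ℕ) < n1) :
    ∀ (t : ℕ) (α : Fin n →₀ ℕ), monomial α (1 : F) ∈ W →
      monomial (α + t • (Finsupp.single i0 1 + Finsupp.single j0 1)) (1 : F) ∈ W := by
  intro t
  induction t with
  | zero => intro α h; simpa using h
  | succ t ih =>
    intro α h
    have h1 := raise hQ hi0 hj0 (ih α h)
    have he : α + t • (Finsupp.single i0 1 + Finsupp.single j0 1)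
        + Finsupp.single i0 1 + Finsupp.single j0 1
        = α + (t + 1) • (Finsupp.single i0 1 + Finsupp.single j0 1) := by
      rw [succ_nsmul]
      abel
    rwa [he] at h1

lemma lowerIter
    (hQ : ∀ i j : Fin n, i ≠ j → ∀ f ∈ W, Q F n n1 c i.castSucc j.castSucc f ∈ W)
    {i0 j0 : Fin n} (hi0 : (i0 : ℕ) < n1) (hj0 : ¬ (j0 : ℕ) < n1) :
    ∀ (t : ℕ) (α : Fin n →₀ ℕ),
      monomial (α + t • (Finsupp.single i0 1 + Finsupp.single j0 1)) (1 : F) ∈ W →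
      monomial α (1 : F) ∈ W := by
  intro t
  induction t with
  | zero => intro α h; simpa using h
  | succ t ih =>
    intro α h
    apply ih
    have hi0j0 : i0 ≠ j0 := fun e => hj0 (e ▸ hi0)
    set γ := α + (t + 1) • (Finsupp.single i0 1 + Finsupp.single j0 1) with hγ
    have hγapp : ∀ l, γ l = α l + (t + 1) * ((if i0 = l then 1 else 0)
        + (if j0 = l then 1 else 0)) := fun l => by
      simp only [hγ, Finsupp.add_apply, Finsupp.smul_apply, Finsupp.single_apply, smul_eq_mul]
      all_goals split_ifs <;> ring
    have hp1 : γ i0 ≠ 0 := by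
      rw [hγapp, if_pos rfl]
      positivity
    have hp2 : γ j0 ≠ 0 := by
      rw [hγapp, if_pos rfl, if_neg hi0j0, zero_add]
      positivity
    have h2 := lower hQ hi0 hj0 hp1 hp2 h
    have he : γ - Finsupp.single i0 1 - Finsupp.single j0 1
        = α + t • (Finsupp.single i0 1 + Finsupp.single j0 1) := by
      ext l
      simp only [hγ, Finsupp.tsub_apply, Finsupp.add_apply, Finsupp.smul_apply,
        Finsupp.single_apply, smul_eq_mul]
      split_ifs <;> omega
    rwa [he] at h2

lemma gen
    (hQ : ∀ i j : Fin n, i ≠ j → ∀ f ∈ W, Q F n n1 c i.castSucc j.castSucc f ∈ W)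
    {i0 j0 : Fin n} (hi0 : (i0 : ℕ) < n1) (hj0 : ¬ (j0 : ℕ) < n1)
    {α β : Fin n →₀ ℕ} (hdeg : tdeg n1 α = tdeg n1 β)
    (h : monomial α (1 : F) ∈ W) : monomial β (1 : F) ∈ W := by
  classical
  set s1 : Finset (Fin n) := Finset.univ.filter (fun l : Fin n => (l : ℕ) < n1) with hs1
  set s2 : Finset (Fin n) := Finset.univ.filter (fun l : Fin n => ¬ (l : ℕ) < n1) with hs2
  set a := ∑ l ∈ s1, α l with ha
  set b := ∑ l ∈ s2, α l with hb
  set a' := ∑ l ∈ s1, β l with ha'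
  set b' := ∑ l ∈ s2, β l with hb'
  have hc := conc hQ hi0 hj0 h
  have harith : (a : ℤ) - b = (a' : ℤ) - b' := by
    have hd := hdeg
    rw [tdeg_split α, tdeg_split β] at hd
    rw [ha, hb, ha', hb']
    push_cast
    convert hd using 2 <;> rw [Nat.cast_sum]
  rcases le_total a a' with hle | hle
  · set t := a' - a with htdef
    have ht1 : a' = a + t := by omega
    have ht2 : b' = b + t := by omega
    have h2 := raiseIter hQ hi0 hj0 t _ hc
    have he : Finsupp.single i0 a + Finsupp.single j0 b
        + t • (Finsupp.single i0 1 + Finsupp.single j0 1)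
        = Finsupp.single i0 a' + Finsupp.single j0 b' := by
      ext l
      simp only [Finsupp.add_apply, Finsupp.smul_apply, Finsupp.single_apply,
        smul_eq_mul, ht1, ht2]
      split_ifs <;> omega
    rw [he] at h2
    exact conc_rev hQ hi0 hj0 rfl rfl h2
  · set t := a - a' with htdef
    have ht1 : a = a' + t := by omega
    have ht2 : b = b' + t := by omega
    have he : Finsupp.single i0 a + Finsupp.single j0 b
        = (Finsupp.single i0 a' + Finsupp.single j0 b')
          + t • (Finsupp.single i0 1 + Finsupp.single j0 1) := by
      ext l
      simp only [Finsupp.add_apply, Finsupp.smul_apply, Finsupp.single_apply,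
        smul_eq_mul, ht1, ht2]
      split_ifs <;> omega
    rw [he] at hc
    have h2 := lowerIter hQ hi0 hj0 t _ hc
    exact conc_rev hQ hi0 hj0 rfl rfl h2

end Gen

section Final
variable {F : Type*} [Field F] [CharZero F] {n n1 : ℕ} {c : F} {k : ℤ}

lemma Agr_stable {T : Module.End F (MvPolynomial (Fin n) F)}
    (h : ∀ α : Fin n →₀ ℕ, tdeg n1 α = k → T (monomial α 1) ∈ Agr F n n1 k) :
    ∀ f ∈ Agr F n n1 k, T f ∈ Agr F n n1 k := by
  intro f hf
  have hle : Agr F n n1 k ≤ (Agr F n n1 k).comap T := by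
    rw [Agr]
    refine Submodule.span_le.2 ?_
    rintro g ⟨α, rfl, hα⟩
    exact h α hα
  exact hle hf

lemma sub_apply_ne {i j : Fin n} (hij : i ≠ j) (α : Fin n →₀ ℕ) :
    (α - (Finsupp.single j 1 : Fin n →₀ ℕ)) i = α i := by
  rw [Finsupp.tsub_apply, Finsupp.single_apply, if_neg (Ne.symm hij)]
  omega

end Final

/-- each `A_{⟨k⟩}` is invariant under the `Q_{i,j}` with `i,j ∈ {1,…,n}`,
and has no nontrivial invariant subspaces. -/
theorem stmt_4 (F : Type*) [Field F] [CharZero F] (n n1 : ℕ) (hn : 2 ≤ n)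
    (hn1 : 1 ≤ n1) (hn1n : n1 < n) (c : F) (k : ℤ) :
    (∀ i j : Fin n, i ≠ j → ∀ f ∈ Agr F n n1 k,
        Q F n n1 c i.castSucc j.castSucc f ∈ Agr F n n1 k) ∧
    (∀ i j : Fin n, ∀ f ∈ Agr F n n1 k,
        (Q F n n1 c i.castSucc i.castSucc - Q F n n1 c j.castSucc j.castSucc) f
          ∈ Agr F n n1 k) ∧
    (∀ W : Submodule F (MvPolynomial (Fin n) F), W ≤ Agr F n n1 k →
      (∀ i j : Fin n, i ≠ j → ∀ f ∈ W, Q F n n1 c i.castSucc j.castSucc f ∈ W) →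
      (∀ i j : Fin n, ∀ f ∈ W,
          (Q F n n1 c i.castSucc i.castSucc - Q F n n1 c j.castSucc j.castSucc) f ∈ W) →
      W = ⊥ ∨ W = Agr F n n1 k) := by
  refine ⟨?_, ?_, ?_⟩
  · -- invariance under off-diagonal Q
    intro i j hij f hf
    refine Agr_stable (fun α hα => ?_) f hf
    by_cases hi : (i : ℕ) < n1 <;> by_cases hj : (j : ℕ) < n1
    · rw [Q_act_11 hi hj hij]
      by_cases h0 : α i = 0
      · rw [show (-(1 * ((α i : F)))) = 0 from by simp [h0], map_zero]
        exact Submodule.zero_mem _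
      · refine monomial_mem_Agr ?_ _
        rw [tdeg_add, tdeg_sub_single i α h0, tdeg_single, if_pos hi, if_pos hj]
        omega
    · rw [Q_act_12 hi hj]
      by_cases h0 : α j = 0
      · rw [show ((1 : F) * (α j : F) * (α i : F)) = 0 from by simp [h0], map_zero]
        exact Submodule.zero_mem _
      · by_cases h1 : α i = 0
        · rw [show ((1 : F) * (α j : F) * (α i : F)) = 0 from by simp [h1], map_zero]
          exact Submodule.zero_mem _
        · refine monomial_mem_Agr ?_ _
          have hij' : i ≠ j := fun e => hj (e ▸ hi)
          have h1' : (α - (Finsupp.single j 1 : Fin n →₀ ℕ)) i ≠ 0 := by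
            rw [sub_apply_ne hij']; exact h1
          rw [tdeg_sub_single i _ h1', tdeg_sub_single j α h0, if_pos hi, if_neg hj]
          omega
    · rw [Q_act_21 hi hj]
      refine monomial_mem_Agr ?_ _
      rw [tdeg_add, tdeg_add, tdeg_single, tdeg_single, if_neg hi, if_pos hj]
      omega
    · rw [Q_act_22 hi hj]
      by_cases h0 : α j = 0
      · rw [show ((1 : F) * (α j : F)) = 0 from by simp [h0], map_zero]
        exact Submodule.zero_mem _
      · refine monomial_mem_Agr ?_ _
        rw [tdeg_add, tdeg_sub_single j α h0, tdeg_single, if_neg hi, if_neg hj]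
        omega
  · -- invariance under diagonal differences
    intro i j f hf
    refine Agr_stable (fun α hα => ?_) f hf
    rw [Qdiff_monomial]
    exact Submodule.smul_mem _ _ (monomial_mem_Agr hα _)
  · -- irreducibility
    intro W hW hQ hD
    by_cases hbot : W = ⊥
    · exact Or.inl hbot
    right
    obtain ⟨α, hαdeg, hαW⟩ := exists_monomial_mem (c := c) hn1 hn1n hW hD hbot
    refine le_antisymm hW ?_
    rw [Agr]
    refine Submodule.span_le.2 ?_
    rintro g ⟨β, rfl, hβ⟩
    have hi0 : ((⟨0, lt_of_lt_of_le (by omega) (le_of_lt hn1n)⟩ : Fin n) : ℕ) < n1 := hn1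
    have hj0 : ¬ ((⟨n1, hn1n⟩ : Fin n) : ℕ) < n1 := lt_irrefl n1
    have hdeg : tdeg n1 α = tdeg n1 β := by
      rw [hαdeg]
      exact hβ.symm
    exact gen hQ hi0 hj0 hdeg hαW
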